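/- A permutation w ∈ S_n is dominant (its rank function vanishes on its essential set) if and only if w avoids the pattern 132. -/
import Mathlib
set_option maxRecDepth 4000


/-- Rank function of a permutation (0-indexed): `r_w(i,j) = #{a ≤ i : w(a) ≤ j}`. -/
def rk {n : ℕ} (w : Equiv.Perm (Fin n)) (i j : Fin n) : ℕ :=
  (Finset.univ.filter (fun a : Fin n => a ≤ i ∧ w a ≤ j)).card

/-- Membership in the Rothe diagram `D(w)`. -/
def inD {n : ℕ} (w : Equiv.Perm (Fin n)) (i j : Fin n) : Prop :=
  j < w i ∧ i < w.symm j

/-- Membership in Fulton's essential set `E(w)`. -/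
def inEss {n : ℕ} (w : Equiv.Perm (Fin n)) (i j : Fin n) : Prop :=
  inD w i j ∧ (∀ i' : Fin n, (i' : ℕ) = (i : ℕ) + 1 → ¬ inD w i' j) ∧
    (∀ j' : Fin n, (j' : ℕ) = (j : ℕ) + 1 → ¬ inD w i j')

/-- `w` contains the pattern `v`. -/
def containsPattern {n m : ℕ} (w : Equiv.Perm (Fin n)) (v : Equiv.Perm (Fin m)) : Prop :=
  ∃ f : Fin m → Fin n, StrictMono f ∧ ∀ a b : Fin m, v a < v b ↔ w (f a) < w (f b)

/-- The pattern `1243` as a permutation of `Fin 4` (0-indexed one-line notation `0 1 3 2`). -/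
def p1243 : Equiv.Perm (Fin 4) := Equiv.swap 2 3

/-- The pattern `2143` as a permutation of `Fin 4` (0-indexed one-line notation `1 0 3 2`). -/
def p2143 : Equiv.Perm (Fin 4) := Equiv.swap 0 1 * Equiv.swap 2 3

/-- The permutation of `S_{k+2}` with one-line notation `v(1) … v(k) (k+2) (k+1)`. -/
def pat {k : ℕ} (v : Equiv.Perm (Fin k)) : Equiv.Perm (Fin (k + 2)) :=
  finSumFinEquiv.symm.trans ((Equiv.sumCongr v (Equiv.swap 0 1)).trans finSumFinEquiv)

lemma rk_mono {n : ℕ} (w : Equiv.Perm (Fin n)) {i j i' j' : Fin n}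
    (hi : i ≤ i') (hj : j ≤ j') : rk w i j ≤ rk w i' j' := by
  apply Finset.card_le_card
  intro a ha
  simp only [Finset.mem_filter, Finset.mem_univ, true_and] at *
  exact ⟨ha.1.trans hi, ha.2.trans hj⟩

lemma rk_pos {n : ℕ} (w : Equiv.Perm (Fin n)) {i j : Fin n} :
    0 < rk w i j ↔ ∃ a, a ≤ i ∧ w a ≤ j := by
  simp [rk, Finset.card_pos, Finset.filter_nonempty_iff]

lemma contains_iff {n : ℕ} (w : Equiv.Perm (Fin n)) :
    containsPattern w (Equiv.swap (1 : Fin 3) 2) ↔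
      ∃ i1 i2 i3 : Fin n, i1 < i2 ∧ i2 < i3 ∧ w i1 < w i3 ∧ w i3 < w i2 := by
  constructor
  · rintro ⟨f, hf, hv⟩
    exact ⟨f 0, f 1, f 2, hf (by decide), hf (by decide),
      (hv 0 2).mp (by decide), (hv 2 1).mp (by decide)⟩
  · rintro ⟨i1, i2, i3, h12, h23, ha, hb⟩
    have h13 := h12.trans h23
    have hab := ha.trans hb
    refine ⟨![i1, i2, i3], ?_, ?_⟩
    · intro a b h
      fin_cases a <;> fin_cases b <;> simp_all <;>
        first | exact h12 | exact h23 | exact h13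
    · intro a b
      fin_cases a <;> fin_cases b <;>
        simp_all [Equiv.swap_apply_def] <;>
        first | exact hab | exact ha | exact hb | exact hab.le | exact ha.le | exact hb.le

lemma to_ess {n : ℕ} (w : Equiv.Perm (Fin n)) :
    ∀ m (i j : Fin n), 2 * n - i.val - j.val ≤ m → inD w i j → 0 < rk w i j →
      ∃ i' j', inEss w i' j' ∧ 0 < rk w i' j' := by
  intro m
  induction m with
  | zero => intro i j hm _ _; have := i.isLt; have := j.isLt; omega
  | succ m ih =>
    intro i j hm hD hr
    by_cases h1 : ∀ i' : Fin n, (i' : ℕ) = (i : ℕ) + 1 → ¬ inD w i' j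
    · by_cases h2 : ∀ j' : Fin n, (j' : ℕ) = (j : ℕ) + 1 → ¬ inD w i j'
      · exact ⟨i, j, ⟨hD, h1, h2⟩, hr⟩
      · push_neg at h2
        obtain ⟨j', hj', hD'⟩ := h2
        have := j'.isLt
        refine ih i j' (by omega) hD'
          (lt_of_lt_of_le hr (rk_mono w le_rfl (by rw [Fin.le_def]; omega)))
    · push_neg at h1
      obtain ⟨i', hi', hD'⟩ := h1
      have := i'.isLt
      exact ih i' j (by omega) hD'
        (lt_of_lt_of_le hr (rk_mono w (by rw [Fin.le_def]; omega) le_rfl))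

/-- `w` is dominant iff `w` avoids the pattern `132` (0-indexed one-line `0 2 1`). -/
theorem stmt14 (n : ℕ) (w : Equiv.Perm (Fin n)) :
    (∀ i j : Fin n, inEss w i j → rk w i j = 0) ↔
      ¬ containsPattern w (Equiv.swap (1 : Fin 3) 2) := by
  rw [contains_iff]
  constructor
  · intro hE
    rintro ⟨i1, i2, i3, h12, h23, ha, hb⟩
    have hD : inD w i2 (w i3) := ⟨hb, by simpa using h23⟩
    have hr : 0 < rk w i2 (w i3) := (rk_pos w).mpr ⟨i1, le_of_lt h12, le_of_lt ha⟩
    obtain ⟨i', j', hess, hr'⟩ := to_ess w (2 * n) i2 (w i3) (by omega) hD hr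
    have := hE i' j' hess
    omega
  · intro h i j hij
    obtain ⟨hD, -, -⟩ := hij
    by_contra hrk
    obtain ⟨a, hai, haj⟩ := (rk_pos w).mp (Nat.pos_of_ne_zero hrk)
    obtain ⟨hji, hiw⟩ := hD
    have hwc : w (w.symm j) = j := w.apply_symm_apply j
    have hac : a < i :=
      lt_of_le_of_ne hai (fun he => absurd (he ▸ haj) (not_le.mpr hji))
    have hne : w a ≠ j := fun h' => by
      have : a = w.symm j := by rw [← h']; exact (w.symm_apply_apply a).symm
      exact absurd this (ne_of_lt (hac.trans hiw))
    have hawc : w a < w (w.symm j) := by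
      rw [hwc]; exact lt_of_le_of_ne haj hne
    exact h ⟨a, i, w.symm j, hac, hiw, hawc, by rw [hwc]; exact hji⟩
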